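/- There exists a nonzero polynomial g in 9 real variables such that for all orthorhombic parameter tuples b, b' ∈ ℝ⁹ with g(b) ≠ 0 and g(b') ≠ 0: if det(Γ_{b'} − I₃) = det(Γ_b − I₃) as elements of ℝ[p₁,p₂,p₃], then b' equals one of the following four tuples: b itself, or b with (b12, b13, b23) replaced by (b12, −2b55−b13, −2b44−b23), by (−2b66−b12, −2b55−b13, b23), or by (−2b66−b12, b13, −2b44−b23) (the remaining six parameters unchanged). In other words, the map from orthorhombic stiffness tensors to slowness polynomials is generically 4-to-1, the fiber consisting of a tensor and its three anomalous companions. -/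
import Mathlib


open MvPolynomial Matrix

/-- The Christoffel matrix of an orthorhombic 3D stiffness tensor with Voigt parameters
`b = (b11,b12,b13,b22,b23,b33,b44,b55,b66)` (indexed `0,…,8`), with polynomial entries in
`ℝ[p₁,p₂,p₃]` (where `p₁ = X 0`, `p₂ = X 1`, `p₃ = X 2`). -/
noncomputable def christoffelOrtho3 (b : Fin 9 → ℝ) :
    Matrix (Fin 3) (Fin 3) (MvPolynomial (Fin 3) ℝ) :=
  !![C (b 0) * X 0 ^ 2 + C (b 8) * X 1 ^ 2 + C (b 7) * X 2 ^ 2,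
     C (b 1 + b 8) * X 0 * X 1,
     C (b 2 + b 7) * X 0 * X 2;
     C (b 1 + b 8) * X 0 * X 1,
     C (b 8) * X 0 ^ 2 + C (b 3) * X 1 ^ 2 + C (b 6) * X 2 ^ 2,
     C (b 4 + b 6) * X 1 * X 2;
     C (b 2 + b 7) * X 0 * X 2,
     C (b 4 + b 6) * X 1 * X 2,
     C (b 7) * X 0 ^ 2 + C (b 6) * X 1 ^ 2 + C (b 5) * X 2 ^ 2]

/-- The slowness polynomial `P_b = det(Γ_b − I₃) ∈ ℝ[p₁,p₂,p₃]`. -/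
noncomputable def slownessPolyOrtho (b : Fin 9 → ℝ) : MvPolynomial (Fin 3) ℝ :=
  (christoffelOrtho3 b - 1).det

/-- First anomalous companion: `(b12, b13, b23) ↦ (b12, −2b55−b13, −2b44−b23)`. -/
def orthoCompanion1 (b : Fin 9 → ℝ) : Fin 9 → ℝ :=
  ![b 0, b 1, -2 * b 7 - b 2, b 3, -2 * b 6 - b 4, b 5, b 6, b 7, b 8]

/-- Second anomalous companion: `(b12, b13, b23) ↦ (−2b66−b12, −2b55−b13, b23)`. -/
def orthoCompanion2 (b : Fin 9 → ℝ) : Fin 9 → ℝ :=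
  ![b 0, -2 * b 8 - b 1, -2 * b 7 - b 2, b 3, b 4, b 5, b 6, b 7, b 8]

/-- Third anomalous companion: `(b12, b13, b23) ↦ (−2b66−b12, b13, −2b44−b23)`. -/
def orthoCompanion3 (b : Fin 9 → ℝ) : Fin 9 → ℝ :=
  ![b 0, -2 * b 8 - b 1, b 2, b 3, -2 * b 6 - b 4, b 5, b 6, b 7, b 8]

def slowVal (b : Fin 9 → ℝ) (p0 p1 p2 : ℝ) : ℝ :=
  (b 0*p0^2 + b 8*p1^2 + b 7*p2^2 - 1) *
    ((b 8*p0^2 + b 3*p1^2 + b 6*p2^2 - 1) * (b 7*p0^2 + b 6*p1^2 + b 5*p2^2 - 1)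
      - ((b 4 + b 6)*p1*p2)^2)
  - ((b 1 + b 8)*p0*p1) * (((b 1 + b 8)*p0*p1) * (b 7*p0^2 + b 6*p1^2 + b 5*p2^2 - 1)
      - ((b 4 + b 6)*p1*p2) * ((b 2 + b 7)*p0*p2))
  + ((b 2 + b 7)*p0*p2) * (((b 1 + b 8)*p0*p1) * ((b 4 + b 6)*p1*p2)
      - (b 8*p0^2 + b 3*p1^2 + b 6*p2^2 - 1) * ((b 2 + b 7)*p0*p2))

lemma eval_slowness (b : Fin 9 → ℝ) (p0 p1 p2 : ℝ) :
    eval ![p0, p1, p2] (slownessPolyOrtho b) = slowVal b p0 p1 p2 := by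
  rw [slownessPolyOrtho, Matrix.det_fin_three]
  simp [christoffelOrtho3, Matrix.sub_apply, Matrix.one_apply, slowVal]
  ring

noncomputable def gPoly : MvPolynomial (Fin 9) ℝ :=
  (X 0 - X 3)*(X 0 - X 5)*(X 0 - X 6)*(X 0 - X 7)*(X 0 - X 8)*
  (X 3 - X 5)*(X 3 - X 6)*(X 3 - X 7)*(X 3 - X 8)*
  (X 5 - X 6)*(X 5 - X 7)*(X 5 - X 8)*
  (X 6 - X 7)*(X 6 - X 8)*(X 7 - X 8)*
  (X 1 + X 8)*(X 2 + X 7)*(X 4 + X 6)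

lemma eval_gPoly (b : Fin 9 → ℝ) :
    eval b gPoly =
      (b 0 - b 3)*(b 0 - b 5)*(b 0 - b 6)*(b 0 - b 7)*(b 0 - b 8)*
      (b 3 - b 5)*(b 3 - b 6)*(b 3 - b 7)*(b 3 - b 8)*
      (b 5 - b 6)*(b 5 - b 7)*(b 5 - b 8)*
      (b 6 - b 7)*(b 6 - b 8)*(b 7 - b 8)*
      (b 1 + b 8)*(b 2 + b 7)*(b 4 + b 6) := by
  simp [gPoly]

lemma gPoly_ne_zero : gPoly ≠ 0 := by
  intro h
  have h2 := congrArg (eval (![1, 1, 1, 2, 1, 3, 4, 5, 6] : Fin 9 → ℝ)) h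
  have e0 : (![1, 1, 1, 2, 1, 3, 4, 5, 6] : Fin 9 → ℝ) 0 = 1 := rfl
  have e1 : (![1, 1, 1, 2, 1, 3, 4, 5, 6] : Fin 9 → ℝ) 1 = 1 := rfl
  have e2 : (![1, 1, 1, 2, 1, 3, 4, 5, 6] : Fin 9 → ℝ) 2 = 1 := rfl
  have e3 : (![1, 1, 1, 2, 1, 3, 4, 5, 6] : Fin 9 → ℝ) 3 = 2 := rfl
  have e4 : (![1, 1, 1, 2, 1, 3, 4, 5, 6] : Fin 9 → ℝ) 4 = 1 := rfl
  have e5 : (![1, 1, 1, 2, 1, 3, 4, 5, 6] : Fin 9 → ℝ) 5 = 3 := rfl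
  have e6 : (![1, 1, 1, 2, 1, 3, 4, 5, 6] : Fin 9 → ℝ) 6 = 4 := rfl
  have e7 : (![1, 1, 1, 2, 1, 3, 4, 5, 6] : Fin 9 → ℝ) 7 = 5 := rfl
  have e8 : (![1, 1, 1, 2, 1, 3, 4, 5, 6] : Fin 9 → ℝ) 8 = 6 := rfl
  rw [eval_gPoly, map_zero, e0, e1, e2, e3, e4, e5, e6, e7, e8] at h2
  norm_num at h2

lemma mem3 {x a b c : ℝ} (h : (x - a) * (x - b) * (x - c) = 0) :
    x = a ∨ x = b ∨ x = c := by
  rcases mul_eq_zero.mp h with h' | h'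
  · rcases mul_eq_zero.mp h' with h'' | h''
    · exact Or.inl (sub_eq_zero.mp h'')
    · exact Or.inr (Or.inl (sub_eq_zero.mp h''))
  · exact Or.inr (Or.inr (sub_eq_zero.mp h'))

lemma resolve3 {x p a b c d : ℝ} (h1 : x = a ∨ x = p ∨ x = b)
    (h2 : x = p ∨ x = c ∨ x = d)
    (hap : a ≠ p) (hac : a ≠ c) (had : a ≠ d)
    (hbp : b ≠ p) (hbc : b ≠ c) (hbd : b ≠ d) : x = p := by
  rcases h1 with rfl | h | rfl
  · rcases h2 with h | h | h
    · exact absurd h hap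
    · exact absurd h hac
    · exact absurd h had
  · exact h
  · rcases h2 with h | h | h
    · exact absurd h hbp
    · exact absurd h hbc
    · exact absurd h hbd

lemma fin9_ext {f g : Fin 9 → ℝ} (h0 : f 0 = g 0) (h1 : f 1 = g 1) (h2 : f 2 = g 2)
    (h3 : f 3 = g 3) (h4 : f 4 = g 4) (h5 : f 5 = g 5) (h6 : f 6 = g 6)
    (h7 : f 7 = g 7) (h8 : f 8 = g 8) : f = g := by
  funext i
  fin_cases i <;> assumption

set_option maxHeartbeats 2000000 in
/-- The map from orthorhombic stiffness tensors to slowness polynomials is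
generically 4-to-1: generically, a tuple with the same slowness polynomial as `b` must be `b`
itself or one of its three anomalous companions. -/
theorem generic_four_to_one_orthorhombic :
    ∃ g : MvPolynomial (Fin 9) ℝ, g ≠ 0 ∧
      ∀ b b' : Fin 9 → ℝ, eval b g ≠ 0 → eval b' g ≠ 0 →
        slownessPolyOrtho b' = slownessPolyOrtho b →
        b' = b ∨ b' = orthoCompanion1 b ∨ b' = orthoCompanion2 b ∨ b' = orthoCompanion3 b := by
  refine ⟨gPoly, gPoly_ne_zero, fun b b' hbne _ h => ?_⟩
  rw [eval_gPoly] at hbne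
  simp only [mul_ne_zero_iff] at hbne
  obtain ⟨⟨⟨⟨⟨⟨⟨⟨⟨⟨⟨⟨⟨⟨⟨⟨⟨h03, h05⟩, h06⟩, h07⟩, h08⟩, h35⟩, h36⟩, h37⟩, h38⟩,
    h56⟩, h57⟩, h58⟩, h67⟩, h68⟩, h78⟩, hG⟩, hH⟩, hK⟩ := hbne
  have hpt : ∀ p0 p1 p2 : ℝ, slowVal b' p0 p1 p2 = slowVal b p0 p1 p2 := fun p0 p1 p2 => by
    rw [← eval_slowness, ← eval_slowness, h]
  have eU1 := hpt 1 0 0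
  have eU2 := hpt 2 0 0
  have eU3 := hpt 3 0 0
  have eV1 := hpt 0 1 0
  have eV2 := hpt 0 2 0
  have eV3 := hpt 0 3 0
  have eW1 := hpt 0 0 1
  have eW2 := hpt 0 0 2
  have eW3 := hpt 0 0 3
  have eP1 := hpt 1 1 0
  have eP2 := hpt 1 2 0
  have eP3 := hpt 2 1 0
  have eQ1 := hpt 1 0 1
  have eQ2 := hpt 1 0 2
  have eQ3 := hpt 2 0 1
  have eR1 := hpt 0 1 1
  have eR2 := hpt 0 1 2
  have eR3 := hpt 0 2 1
  have e111 := hpt 1 1 1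
  simp only [slowVal] at eU1 eU2 eU3 eV1 eV2 eV3 eW1 eW2 eW3 eP1 eP2 eP3 eQ1 eQ2 eQ3 eR1 eR2 eR3 e111
  -- symmetric functions of the three diagonal triples
  have hs11 : b' 0 + b' 8 + b' 7 = b 0 + b 8 + b 7 := by
    linear_combination (3/2 : ℝ) * eU1 - (3/20 : ℝ) * eU2 + (1/90 : ℝ) * eU3
  have hs21 : b' 0 * b' 8 + b' 0 * b' 7 + b' 8 * b' 7
      = b 0 * b 8 + b 0 * b 7 + b 8 * b 7 := by
    linear_combination (13/24 : ℝ) * eU1 - (1/6 : ℝ) * eU2 + (1/72 : ℝ) * eU3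
  have hs31 : b' 0 * b' 8 * b' 7 = b 0 * b 8 * b 7 := by
    linear_combination (1/24 : ℝ) * eU1 - (1/60 : ℝ) * eU2 + (1/360 : ℝ) * eU3
  have hs12 : b' 8 + b' 3 + b' 6 = b 8 + b 3 + b 6 := by
    linear_combination (3/2 : ℝ) * eV1 - (3/20 : ℝ) * eV2 + (1/90 : ℝ) * eV3
  have hs22 : b' 8 * b' 3 + b' 8 * b' 6 + b' 3 * b' 6
      = b 8 * b 3 + b 8 * b 6 + b 3 * b 6 := by
    linear_combination (13/24 : ℝ) * eV1 - (1/6 : ℝ) * eV2 + (1/72 : ℝ) * eV3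
  have hs32 : b' 8 * b' 3 * b' 6 = b 8 * b 3 * b 6 := by
    linear_combination (1/24 : ℝ) * eV1 - (1/60 : ℝ) * eV2 + (1/360 : ℝ) * eV3
  have hs13 : b' 7 + b' 6 + b' 5 = b 7 + b 6 + b 5 := by
    linear_combination (3/2 : ℝ) * eW1 - (3/20 : ℝ) * eW2 + (1/90 : ℝ) * eW3
  have hs23 : b' 7 * b' 6 + b' 7 * b' 5 + b' 6 * b' 5
      = b 7 * b 6 + b 7 * b 5 + b 6 * b 5 := by
    linear_combination (13/24 : ℝ) * eW1 - (1/6 : ℝ) * eW2 + (1/72 : ℝ) * eW3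
  have hs33 : b' 7 * b' 6 * b' 5 = b 7 * b 6 * b 5 := by
    linear_combination (1/24 : ℝ) * eW1 - (1/60 : ℝ) * eW2 + (1/360 : ℝ) * eW3
  -- pin down the diagonal entries
  have hm1 : (b' 8 - b 0) * (b' 8 - b 8) * (b' 8 - b 7) = 0 := by
    linear_combination (b' 8 ^ 2) * hs11 - b' 8 * hs21 + hs31
  have hm2 : (b' 8 - b 8) * (b' 8 - b 3) * (b' 8 - b 6) = 0 := by
    linear_combination (b' 8 ^ 2) * hs12 - b' 8 * hs22 + hs32
  have hm3 : (b' 7 - b 0) * (b' 7 - b 7) * (b' 7 - b 8) = 0 := by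
    linear_combination (b' 7 ^ 2) * hs11 - b' 7 * hs21 + hs31
  have hm4 : (b' 7 - b 7) * (b' 7 - b 6) * (b' 7 - b 5) = 0 := by
    linear_combination (b' 7 ^ 2) * hs13 - b' 7 * hs23 + hs33
  have hm5 : (b' 6 - b 8) * (b' 6 - b 6) * (b' 6 - b 3) = 0 := by
    linear_combination (b' 6 ^ 2) * hs12 - b' 6 * hs22 + hs32
  have hm6 : (b' 6 - b 6) * (b' 6 - b 7) * (b' 6 - b 5) = 0 := by
    linear_combination (b' 6 ^ 2) * hs13 - b' 6 * hs23 + hs33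
  have hd8 : b' 8 = b 8 :=
    resolve3 (mem3 hm1) (mem3 hm2) (sub_ne_zero.mp h08) (sub_ne_zero.mp h03)
      (sub_ne_zero.mp h06) (sub_ne_zero.mp h78) (Ne.symm (sub_ne_zero.mp h37))
      (Ne.symm (sub_ne_zero.mp h67))
  have hd7 : b' 7 = b 7 :=
    resolve3 (mem3 hm3) (mem3 hm4) (sub_ne_zero.mp h07) (sub_ne_zero.mp h06)
      (sub_ne_zero.mp h05) (Ne.symm (sub_ne_zero.mp h78)) (Ne.symm (sub_ne_zero.mp h68))
      (Ne.symm (sub_ne_zero.mp h58))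
  have hd6 : b' 6 = b 6 :=
    resolve3 (mem3 hm5) (mem3 hm6) (Ne.symm (sub_ne_zero.mp h68))
      (Ne.symm (sub_ne_zero.mp h78)) (Ne.symm (sub_ne_zero.mp h58))
      (sub_ne_zero.mp h36) (sub_ne_zero.mp h37) (sub_ne_zero.mp h35)
  have hd0 : b' 0 = b 0 := by linarith only [hs11, hd7, hd8]
  have hd3 : b' 3 = b 3 := by linarith only [hs12, hd6, hd8]
  have hd5 : b' 5 = b 5 := by linarith only [hs13, hd6, hd7]
  rw [hd0, hd3, hd5, hd6, hd7, hd8] at eP1 eP2 eP3 eQ1 eQ2 eQ3 eR1 eR2 eR3 e111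
  -- off-diagonal information
  have hG2 : (b' 1 + b 8) ^ 2 = (b 1 + b 8) ^ 2 := by
    linear_combination (5/3 : ℝ) * eP1 - (1/12 : ℝ) * eP2 - (1/12 : ℝ) * eP3
  have hH2 : (b' 2 + b 7) ^ 2 = (b 2 + b 7) ^ 2 := by
    linear_combination (5/3 : ℝ) * eQ1 - (1/12 : ℝ) * eQ2 - (1/12 : ℝ) * eQ3
  have hK2 : (b' 4 + b 6) ^ 2 = (b 4 + b 6) ^ 2 := by
    linear_combination (5/3 : ℝ) * eR1 - (1/12 : ℝ) * eR2 - (1/12 : ℝ) * eR3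
  have hGHK : (b' 1 + b 8) * (b' 2 + b 7) * (b' 4 + b 6)
      = (b 1 + b 8) * (b 2 + b 7) * (b 4 + b 6) := by
    linear_combination (1/2 : ℝ) * e111 + ((b 7 + b 6 + b 5 - 1)/2) * hG2 +
      ((b 8 + b 6 + b 3 - 1)/2) * hH2 + ((b 0 + b 8 + b 7 - 1)/2) * hK2
  have hsg : b' 1 = b 1 ∨ b' 1 = -2 * b 8 - b 1 := by
    rcases mul_eq_zero.mp (show ((b' 1 + b 8) - (b 1 + b 8)) * ((b' 1 + b 8) + (b 1 + b 8)) = 0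
      by linear_combination hG2) with h' | h'
    · exact Or.inl (by linarith only [h'])
    · exact Or.inr (by linarith only [h'])
  have hsh : b' 2 = b 2 ∨ b' 2 = -2 * b 7 - b 2 := by
    rcases mul_eq_zero.mp (show ((b' 2 + b 7) - (b 2 + b 7)) * ((b' 2 + b 7) + (b 2 + b 7)) = 0
      by linear_combination hH2) with h' | h'
    · exact Or.inl (by linarith only [h'])
    · exact Or.inr (by linarith only [h'])
  have hsk : b' 4 = b 4 ∨ b' 4 = -2 * b 6 - b 4 := by
    rcases mul_eq_zero.mp (show ((b' 4 + b 6) - (b 4 + b 6)) * ((b' 4 + b 6) + (b 4 + b 6)) = 0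
      by linear_combination hK2) with h' | h'
    · exact Or.inl (by linarith only [h'])
    · exact Or.inr (by linarith only [h'])
  rcases hsg with hg | hg <;> rcases hsh with hh | hh <;> rcases hsk with hk | hk
  · exact Or.inl (fin9_ext hd0 hg hh hd3 hk hd5 hd6 hd7 hd8)
  · -- (+,+,-): contradiction
    rw [hg, hh, hk] at hGHK
    have hz : (b 1 + b 8) * ((b 2 + b 7) * (b 4 + b 6)) = 0 := by
      linear_combination (-1/2 : ℝ) * hGHK
    exact absurd hz (mul_ne_zero hG (mul_ne_zero hH hK))
  · -- (+,-,+): contradiction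
    rw [hg, hh, hk] at hGHK
    have hz : (b 1 + b 8) * ((b 2 + b 7) * (b 4 + b 6)) = 0 := by
      linear_combination (-1/2 : ℝ) * hGHK
    exact absurd hz (mul_ne_zero hG (mul_ne_zero hH hK))
  · -- (+,-,-): companion 1
    exact Or.inr (Or.inl (fin9_ext hd0 hg hh hd3 hk hd5 hd6 hd7 hd8))
  · -- (-,+,+): contradiction
    rw [hg, hh, hk] at hGHK
    have hz : (b 1 + b 8) * ((b 2 + b 7) * (b 4 + b 6)) = 0 := by
      linear_combination (-1/2 : ℝ) * hGHK
    exact absurd hz (mul_ne_zero hG (mul_ne_zero hH hK))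
  · -- (-,+,-): companion 3
    exact Or.inr (Or.inr (Or.inr (fin9_ext hd0 hg hh hd3 hk hd5 hd6 hd7 hd8)))
  · -- (-,-,+): companion 2
    exact Or.inr (Or.inr (Or.inl (fin9_ext hd0 hg hh hd3 hk hd5 hd6 hd7 hd8)))
  · -- (-,-,-): contradiction
    rw [hg, hh, hk] at hGHK
    have hz : (b 1 + b 8) * ((b 2 + b 7) * (b 4 + b 6)) = 0 := by
      linear_combination (-1/2 : ℝ) * hGHK
    exact absurd hz (mul_ne_zero hG (mul_ne_zero hH hK))
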